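/- arXiv:math/0206297 — 5 statements merged into one kernel-verified Lean document; each statement's English description precedes it below -/
import Mathlib

section
/- Let k be a field of characteristic zero, A a commutative k-algebra, G a finite group acting on A by k-algebra automorphisms, and M a G-equivariant A-module. Then M descends to Spec A^G if and only if the canonical G-equivariant A-linear map A ⊗_{A^G} M^G → M, a ⊗ x ↦ a·x, is an isomorphism. -/
/-!
STATEMENT 5: for a field `k` of characteristic zero, a commutative
`k`-algebra `A`, a finite group `G` acting on `A` by `k`-algebra
automorphisms, and a `G`-equivariant `A`-module `M`: `M` descends to
`Spec Aᴳ` if and only if the canonical (`G`-equivariant, `A`-linear) map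
`A ⊗[Aᴳ] Mᴳ → M`, `a ⊗ x ↦ a • x`, is an isomorphism (formalized:
bijective).
-/

open TensorProduct

universe u v

/-- `M` is a `G`-equivariant `A`-module: `g • (a • x) = (g • a) • (g • x)`. -/
class IsEquivariantModule (G A M : Type*) [SMul G A] [SMul G M] [SMul A M] :
    Prop where
  smul_smul_smul : ∀ (g : G) (a : A) (x : M), g • (a • x) = (g • a) • (g • x)

/-- The invariant subalgebra `Aᴳ` of the `G`-action on the `k`-algebra `A`. -/
def invAlg (k : Type*) (A : Type u) (G : Type*) [CommSemiring k] [CommRing A]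
    [Algebra k A] [Group G] [MulSemiringAction G A] [SMulCommClass G k A] :
    Subalgebra k A where
  carrier := {a | ∀ g : G, g • a = a}
  mul_mem' := fun ha hb g => by rw [smul_mul', ha g, hb g]
  add_mem' := fun ha hb g => by rw [smul_add, ha g, hb g]
  algebraMap_mem' := fun c g => by
    rw [Algebra.algebraMap_eq_smul_one, smul_comm, smul_one]

/-- A `G`-equivariant `A`-module `M` *descends to `Spec Aᴳ`* if there are an
`Aᴳ`-module `Q` and a `G`-equivariant `A`-linear isomorphism
`A ⊗[Aᴳ] Q ≃ M`, where `G` acts on `A ⊗[Aᴳ] Q` through the factor `A`. -/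
def Descends (k : Type*) (A : Type u) (G : Type*) [Field k] [CommRing A]
    [Algebra k A] [Group G] [MulSemiringAction G A] [SMulCommClass G k A]
    (M : Type v) [AddCommGroup M] [Module A M] [DistribMulAction G M] : Prop :=
  ∃ (Q : Type v) (_ : AddCommGroup Q) (_ : Module (invAlg k A G) Q)
    (e : (A ⊗[invAlg k A G] Q) ≃ₗ[A] M),
      ∀ (g : G) (a : A) (q : Q), e ((g • a) ⊗ₜ q) = g • e (a ⊗ₜ q)

/-- The subgroup `Mᴳ` of `G`-fixed elements of `M`. -/
def fixedPointsAddSubgroup (G M : Type*) [Group G] [AddCommGroup M]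
    [DistribMulAction G M] : AddSubgroup M where
  carrier := {x | ∀ g : G, g • x = x}
  add_mem' := fun hx hy g => by rw [smul_add, hx g, hy g]
  zero_mem' := fun g => smul_zero g
  neg_mem' := fun hx g => by rw [smul_neg, hx g]

section

variable (k : Type*) [Field k] (A : Type u) [CommRing A] [Algebra k A]
variable (G : Type*) [Group G] [MulSemiringAction G A] [SMulCommClass G k A]
variable (M : Type v) [AddCommGroup M] [Module A M] [DistribMulAction G M]
variable [IsEquivariantModule G A M]

/-- `Mᴳ` is a module over `Aᴳ`. -/
instance fixedPointsSMul : SMul (invAlg k A G) ↥(fixedPointsAddSubgroup G M) :=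
  ⟨fun c x => ⟨(c : A) • (x : M), fun g => by
    rw [IsEquivariantModule.smul_smul_smul, c.2 g, x.2 g]⟩⟩

@[simp] theorem fixedPoints_coe_smul (c : invAlg k A G)
    (x : ↥(fixedPointsAddSubgroup G M)) :
    ((c • x : ↥(fixedPointsAddSubgroup G M)) : M) = (c : A) • (x : M) := rfl

/-- `Mᴳ` is a module over `Aᴳ`. -/
instance fixedPointsModule : Module (invAlg k A G) ↥(fixedPointsAddSubgroup G M) where
  one_smul x := Subtype.ext (by simp)
  mul_smul c d x := Subtype.ext (by simp [mul_smul])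
  smul_zero c := Subtype.ext (by simp)
  smul_add c x y := Subtype.ext (by simp [smul_add])
  add_smul c d x := Subtype.ext (by simp [add_smul])
  zero_smul x := Subtype.ext (by simp)

/-- The canonical `G`-equivariant `A`-linear map `A ⊗[Aᴳ] Mᴳ → M`,
`a ⊗ x ↦ a • x` (the counit of the adjunction, realized as an additive map;
it is `A`-linear and `G`-equivariant). -/
noncomputable def counit :
    (A ⊗[invAlg k A G] ↥(fixedPointsAddSubgroup G M)) →+ M :=
  TensorProduct.liftAddHom
    { toFun := fun a =>
        { toFun := fun x => a • (x : M)
          map_zero' := by simp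
          map_add' := fun x y => by simp [smul_add] }
      map_zero' := by ext x; exact zero_smul A _
      map_add' := fun a b => by ext x; exact add_smul a b _ }
    (fun c a x => by
      simp only [AddMonoidHom.coe_mk, ZeroHom.coe_mk]
      rw [Algebra.smul_def, mul_smul, ← smul_comm]
      rfl)

lemma counit_tmul (a : A) (x : ↥(fixedPointsAddSubgroup G M)) :
    counit k A G M (a ⊗ₜ x) = a • (x : M) := rfl

lemma counit_smul (a : A)
    (t : A ⊗[invAlg k A G] ↥(fixedPointsAddSubgroup G M)) :
    counit k A G M (a • t) = a • counit k A G M t := by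
  induction t using TensorProduct.induction_on with
  | zero => simp
  | tmul a' x => rw [smul_tmul', counit_tmul, counit_tmul, smul_eq_mul, mul_smul]
  | add t₁ t₂ h₁ h₂ => rw [smul_add, map_add, h₁, h₂, map_add, smul_add]

/-- The counit as an `A`-linear map. -/
noncomputable def counitL :
    (A ⊗[invAlg k A G] ↥(fixedPointsAddSubgroup G M)) →ₗ[A] M where
  toFun := counit k A G M
  map_add' := map_add _
  map_smul' := counit_smul k A G M

lemma smul_algebraMap' (g : G) (r : k) :
    g • (algebraMap k A r) = algebraMap k A r := by
  rw [Algebra.algebraMap_eq_smul_one, smul_comm, smul_one]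

set_option synthInstance.maxHeartbeats 400000
set_option maxHeartbeats 1000000

/-- **Descent is detected by the adjunction counit** (affine finite-group
case): `M` descends to `Spec Aᴳ` iff the canonical map `A ⊗[Aᴳ] Mᴳ → M` is
an isomorphism. -/
theorem descends_iff_counit_bijective [CharZero k] [Finite G] :
    Descends k A G M ↔ Function.Bijective (counit k A G M) := by
  constructor
  · rintro ⟨Q, _, _, e, he⟩
    cases nonempty_fintype G
    have hcard : ((Fintype.card G : k)) ≠ 0 :=
      Nat.cast_ne_zero.2 Fintype.card_ne_zero
    set c : A := algebraMap k A ((Fintype.card G : k)⁻¹) with hc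
    -- averaging: every fixed point is hit from `Q`
    have key : ∀ t : A ⊗[invAlg k A G] Q, ∃ q : Q,
        e ((1 : A) ⊗ₜ q) = c • ∑ g : G, g • e t := by
      intro t
      induction t using TensorProduct.induction_on with
      | zero => exact ⟨0, by simp⟩
      | tmul a q =>
        have hb : ∀ h : G, h • (c * ∑ g : G, g • a) = c * ∑ g : G, g • a := by
          intro h
          rw [smul_mul', hc, smul_algebraMap']
          congr 1
          rw [Finset.smul_sum]
          calc ∑ g : G, h • g • a = ∑ g : G, (h * g) • a := by
                simp [mul_smul]
            _ = ∑ g : G, g • a :=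
                Fintype.sum_equiv (Equiv.mulLeft h) _ _ (fun g => rfl)
        refine ⟨(⟨c * ∑ g : G, g • a, hb⟩ : invAlg k A G) • q, ?_⟩
        have h1 : ((1 : A) ⊗ₜ[invAlg k A G] ((⟨c * ∑ g : G, g • a, hb⟩ : invAlg k A G) • q))
            = (c * ∑ g : G, g • a) ⊗ₜ[invAlg k A G] q := by
          rw [← TensorProduct.smul_tmul]
          congr 1
          exact mul_one _
        rw [h1]
        have h2 : ∑ g : G, g • e (a ⊗ₜ[invAlg k A G] q)
            = e ((∑ g : G, g • a) ⊗ₜ[invAlg k A G] q) := by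
          rw [TensorProduct.sum_tmul, map_sum]
          exact Finset.sum_congr rfl fun g _ => (he g a q).symm
        rw [h2, ← map_smul, smul_tmul', smul_eq_mul]
      | add t₁ t₂ h₁ h₂ =>
        obtain ⟨q₁, hq₁⟩ := h₁
        obtain ⟨q₂, hq₂⟩ := h₂
        refine ⟨q₁ + q₂, ?_⟩
        rw [TensorProduct.tmul_add, map_add, hq₁, hq₂, map_add, ← smul_add,
          ← Finset.sum_add_distrib]
        simp [smul_add]
    -- the comparison map `Q → Mᴳ`
    have hfix : ∀ q : Q, ∀ g : G, g • e ((1 : A) ⊗ₜ q) = e ((1 : A) ⊗ₜ q) := by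
      intro q g
      rw [← he g 1 q, smul_one]
    have hBsmul : ∀ (b : invAlg k A G) (t : A ⊗[invAlg k A G] Q), b • t = (b : A) • t := by
      intro b t
      induction t using TensorProduct.induction_on with
      | zero => simp
      | tmul a q => rw [smul_tmul']; exact smul_tmul' b a q
      | add t₁ t₂ h₁ h₂ => rw [smul_add, smul_add, h₁, h₂]
    let φ : Q →ₗ[invAlg k A G] ↥(fixedPointsAddSubgroup G M) :=
      { toFun := fun q => ⟨e ((1 : A) ⊗ₜ q), hfix q⟩
        map_add' := fun q q' => Subtype.ext <| by
          simp only [AddSubgroup.coe_add]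
          rw [TensorProduct.tmul_add, map_add]
        map_smul' := fun b q => Subtype.ext <| by
          show (e ((1 : A) ⊗ₜ (b • q)) : M) = (b : A) • e ((1 : A) ⊗ₜ q)
          rw [TensorProduct.tmul_smul]
          exact (congrArg e (hBsmul b _)).trans (map_smul e _ _) }
    have hφsurj : Function.Surjective φ := by
      rintro ⟨x, hx⟩
      obtain ⟨q, hq⟩ := key (e.symm x)
      refine ⟨q, Subtype.ext ?_⟩
      show e ((1 : A) ⊗ₜ q) = x
      rw [hq, e.apply_symm_apply]
      have h3 : ∑ g : G, g • x = (Fintype.card G : A) • x := by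
        rw [Finset.sum_congr rfl fun g _ => hx g, Finset.sum_const,
          Finset.card_univ, Nat.cast_smul_eq_nsmul]
      rw [h3, smul_smul, hc, ← map_natCast (algebraMap k A) (Fintype.card G),
        ← map_mul, inv_mul_cancel₀ hcard, map_one, one_smul]
    have hcomp : ∀ t : A ⊗[invAlg k A G] Q,
        counit k A G M (LinearMap.baseChange A φ t) = e t := by
      intro t
      induction t using TensorProduct.induction_on with
      | zero => simp
      | tmul a q =>
        rw [LinearMap.baseChange_tmul, _root_.counit_tmul]
        show a • e ((1 : A) ⊗ₜ q) = e (a ⊗ₜ q)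
        rw [← map_smul, smul_tmul', smul_eq_mul, mul_one]
      | add t₁ t₂ h₁ h₂ => rw [map_add, map_add, h₁, h₂, map_add]
    have hψsurj : Function.Surjective (LinearMap.baseChange A φ) := by
      intro t
      induction t using TensorProduct.induction_on with
      | zero => exact ⟨0, map_zero _⟩
      | tmul a x =>
        obtain ⟨q, hq⟩ := hφsurj x
        exact ⟨a ⊗ₜ q, by rw [LinearMap.baseChange_tmul, hq]⟩
      | add t₁ t₂ h₁ h₂ =>
        obtain ⟨s₁, hs₁⟩ := h₁
        obtain ⟨s₂, hs₂⟩ := h₂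
        exact ⟨s₁ + s₂, by rw [map_add, hs₁, hs₂]⟩
    constructor
    · intro t₁ t₂ hEq
      obtain ⟨s₁, rfl⟩ := hψsurj t₁
      obtain ⟨s₂, rfl⟩ := hψsurj t₂
      rw [hcomp, hcomp] at hEq
      rw [e.injective hEq]
    · intro m
      exact ⟨LinearMap.baseChange A φ (e.symm m), by
        rw [hcomp, e.apply_symm_apply]⟩
  · intro hbij
    refine ⟨↥(fixedPointsAddSubgroup G M), inferInstance, inferInstance,
      LinearEquiv.ofBijective (counitL k A G M) hbij, ?_⟩
    intro g a q
    show counit k A G M ((g • a) ⊗ₜ q) = g • counit k A G M (a ⊗ₜ q)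
    rw [_root_.counit_tmul, _root_.counit_tmul, IsEquivariantModule.smul_smul_smul g a (q : M),
      q.2 g]

end
end

section
/- Let k be a field of characteristic zero, A a commutative k-algebra, and G a finite group acting on A by k-algebra automorphisms. For every A^G-module N, the canonical A^G-linear map N → (A ⊗_{A^G} N)^G, x ↦ 1 ⊗ x, is an isomorphism, where G acts on A ⊗_{A^G} N through the factor A. -/
/-!
Let `ρ a = ∑ g, g • a` be the Reynolds operator `A → Aᴳ` and `κ : A ⊗ N → N` the contraction
`a ⊗ x ↦ ρ a • x`. Then `κ (1 ⊗ x) = |G| • x` and `1 ⊗ κ t = ∑ g, g • t`, which is `|G| • t` for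
invariant `t`. Since `|G|` is a unit of `Aᴳ` in characteristic zero, `|G|⁻¹ • κ` inverts
`x ↦ 1 ⊗ x`.
-/

open TensorProduct

universe u v

namespace invAlg

variable (k : Type*) {A : Type u} (G : Type*) [CommSemiring k] [CommRing A] [Algebra k A]
  [Group G] [MulSemiringAction G A] [SMulCommClass G k A]

theorem smul_comm_smul (g : G) (c : invAlg k A G) (a : A) : g • (c • a) = c • (g • a) := by
  rw [Subalgebra.smul_def, smul_eq_mul, smul_mul', c.2 g, Subalgebra.smul_def, smul_eq_mul]

variable (A) [Fintype G]

/-- Not divided by `|G|`, so that `k` may be any commutative semiring. -/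
noncomputable def reynolds : A →ₗ[invAlg k A G] invAlg k A G where
  toFun a := ⟨∑ g : G, g • a, fun h => by
    rw [Finset.smul_sum]
    exact Fintype.sum_equiv (Equiv.mulLeft h) _ _ fun g => (mul_smul h g a).symm⟩
  map_add' a b := by ext; simp [Finset.sum_add_distrib]
  map_smul' c a := by
    ext
    simp only [smul_comm_smul, ← Finset.smul_sum]
    rfl

theorem coe_reynolds (a : A) : (reynolds k A G a : A) = ∑ g : G, g • a := rfl

theorem reynolds_one : reynolds k A G 1 = Fintype.card G := by
  ext
  simp only [coe_reynolds, smul_one, Finset.sum_const, Finset.card_univ, nsmul_one]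
  rfl

theorem isUnit_card (h : IsUnit (Fintype.card G : k)) :
    IsUnit (Fintype.card G : invAlg k A G) := by
  simpa using h.map (algebraMap k (invAlg k A G))

variable (N : Type v) [AddCommGroup N] [Module (invAlg k A G) N]

noncomputable def reynoldsContract : A ⊗[invAlg k A G] N →ₗ[invAlg k A G] N :=
  TensorProduct.lift (LinearMap.lsmul (invAlg k A G) N ∘ₗ reynolds k A G)

theorem reynoldsContract_tmul (a : A) (x : N) :
    reynoldsContract k A G N (a ⊗ₜ x) = reynolds k A G a • x := rfl

theorem reynoldsContract_one_tmul (x : N) :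
    reynoldsContract k A G N ((1 : A) ⊗ₜ x) = (Fintype.card G : invAlg k A G) • x := by
  rw [reynoldsContract_tmul, reynolds_one]

end invAlg

section

variable (k : Type*) [Field k] (A : Type u) [CommRing A] [Algebra k A]
variable (G : Type*) [Group G] [MulSemiringAction G A] [SMulCommClass G k A]
variable (N : Type v) [AddCommGroup N] [Module (invAlg k A G) N]

set_option synthInstance.maxHeartbeats 1000000 in
/-- The action of `g : G` on `A ⊗[Aᴳ] N` through the factor `A`. -/
noncomputable def gAct (g : G) :
    (A ⊗[invAlg k A G] N) →+ (A ⊗[invAlg k A G] N) :=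
  TensorProduct.liftAddHom
    { toFun := fun a =>
        { toFun := fun x => (g • a) ⊗ₜ[invAlg k A G] x
          map_zero' := TensorProduct.tmul_zero _ _
          map_add' := fun x y => TensorProduct.tmul_add _ _ _ }
      map_zero' := by ext x; simp
      map_add' := fun a b => by ext x; simp [smul_add, TensorProduct.add_tmul] }
    (fun c a x => by
      simp only [AddMonoidHom.coe_mk, ZeroHom.coe_mk]
      have h : g • ((c : invAlg k A G) • a) = (c : invAlg k A G) • (g • a) := by
        rw [Algebra.smul_def, smul_mul', Algebra.smul_def]
        congr 1
        exact c.2 g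
      rw [h, ← TensorProduct.smul_tmul', TensorProduct.tmul_smul])

theorem gAct_tmul (g : G) (a : A) (x : N) :
    gAct k A G N g (a ⊗ₜ x) = (g • a) ⊗ₜ x := rfl

section Reynolds

variable [Fintype G]

theorem one_tmul_reynoldsContract (t : A ⊗[invAlg k A G] N) :
    (1 : A) ⊗ₜ invAlg.reynoldsContract k A G N t = ∑ g : G, gAct k A G N g t := by
  induction t using TensorProduct.induction_on with
  | zero => simp
  | tmul a x =>
    rw [invAlg.reynoldsContract_tmul, tmul_smul, smul_tmul', Subalgebra.smul_def, smul_eq_mul,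
      mul_one, invAlg.coe_reynolds, sum_tmul]
    simp only [gAct_tmul]
  | add t t' ht ht' => simp only [map_add, tmul_add, ht, ht', Finset.sum_add_distrib]

theorem one_tmul_reynoldsContract_of_forall_eq {t : A ⊗[invAlg k A G] N}
    (ht : ∀ g : G, gAct k A G N g t = t) :
    (1 : A) ⊗ₜ invAlg.reynoldsContract k A G N t = (Fintype.card G : invAlg k A G) • t := by
  simp [one_tmul_reynoldsContract, ht, Nat.cast_smul_eq_nsmul]

end Reynolds

/-- **`π_*^G ∘ π^* ≅ id`** (affine finite-group case): for every `Aᴳ`-module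
`N` the canonical map `N → (A ⊗[Aᴳ] N)ᴳ`, `x ↦ 1 ⊗ x`, is bijective. -/
theorem canonical_map_to_invariants_of_baseChange_bijective
    [CharZero k] [Finite G] :
    Function.Bijective
      (fun x : N =>
        (⟨(1 : A) ⊗ₜ[invAlg k A G] x, fun g => by
            simp only [gAct, TensorProduct.liftAddHom_tmul, AddMonoidHom.coe_mk,
              ZeroHom.coe_mk, smul_one]⟩ :
          {t : A ⊗[invAlg k A G] N // ∀ g : G, gAct k A G N g t = t})) := by
  cases nonempty_fintype G
  obtain ⟨u, hu⟩ : IsUnit (Fintype.card G : invAlg k A G) :=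
    invAlg.isUnit_card k A G (Nat.cast_ne_zero.mpr Fintype.card_ne_zero).isUnit
  refine Function.bijective_iff_has_inverse.mpr
    ⟨fun t => u⁻¹ • invAlg.reynoldsContract k A G N t.1, fun x => ?_, fun t => ?_⟩
  · dsimp only
    rw [invAlg.reynoldsContract_one_tmul, ← hu]
    exact inv_smul_smul u x
  · ext
    dsimp only
    rw [Units.smul_def, tmul_smul, one_tmul_reynoldsContract_of_forall_eq k A G N t.2, ← hu]
    exact inv_smul_smul u t.1

end
end

section
/- Let k be an algebraically closed field of characteristic zero, A a finitely generated commutative k-algebra, G a finite group acting on A by k-algebra automorphisms, and M a finitely generated G-equivariant A-module. Let m be a maximal ideal of A and let s ∈ M/mM be an element fixed by every element of the stabilizer G_m. Then there exists a G-invariant element t ∈ M^G whose image under the quotient map M → M/mM is s. -/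
/-!
Lift `s` to some `x₀ ∈ M`. By the Chinese remainder theorem there is `b ≡ 1 (mod m)` lying in
every translate `g⁻¹ • m` different from `m`; then `x = b • x₀` still lifts `s` and `g • x ∈ mM`
for `g ∉ G_m`, while `g • x ≡ x` for `g ∈ G_m`. Hence `∑ g, g • x ≡ |G_m| • x (mod mM)`, and since
`|G_m|` is invertible in characteristic zero, `|G_m|⁻¹ • ∑ g, g • x` is an invariant lift of `s`.
-/

open Finset

theorem Ideal.exists_sub_one_mem_and_mem_of_ne {R ι : Type*} [CommRing R] [Finite ι]
    {m : Ideal R} (hm : m.IsMaximal) {J : ι → Ideal R} (hJ : ∀ i, (J i).IsMaximal) :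
    ∃ b : R, b - 1 ∈ m ∧ ∀ i, J i ≠ m → b ∈ J i := by
  classical
  have := Fintype.ofFinite ι
  have hcop : IsCoprime m (⨅ i ∈ ({i | J i ≠ m} : Finset ι), J i) :=
    isCoprime_biInf fun i hi ↦ have := hJ i; isCoprime_of_isMaximal (by simp_all [eq_comm])
  obtain ⟨a, ha, b, hb, hab⟩ := isCoprime_iff_exists.mp hcop
  refine ⟨b, by rw [← hab, sub_add_cancel_right]; exact neg_mem ha, fun i hi ↦ ?_⟩
  simp only [Submodule.mem_iInf] at hb
  exact hb i (by simpa using hi)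

theorem smul_eq_self_of_mul_natCast_eq_one {G R : Type*} [Monoid G] [CommSemiring R]
    [MulSemiringAction G R] (g : G) {u : R} {n : ℕ} (hu : u * n = 1) : g • u = u := by
  have hgu : g • u * n = 1 := by
    have hn : g • (n : R) = n := map_natCast (MulSemiringAction.toRingHom G R g) n
    rw [← hn, ← smul_mul', hu, smul_one]
  calc g • u = g • u * (u * n) := by rw [hu, mul_one]
    _ = u := by rw [mul_left_comm, hgu, mul_one]

theorem smul_sum_univ_smul {G M : Type*} [Group G] [Fintype G] [AddCommMonoid M]
    [DistribMulAction G M] (g : G) (x : M) : g • ∑ h : G, h • x = ∑ h : G, h • x := by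
  rw [smul_sum]
  exact Fintype.sum_equiv (Equiv.mulLeft g) _ _ fun h ↦ (mul_smul g h x).symm

theorem sum_sub_card_nsmul_mem {ι M S : Type*} [Fintype ι] [AddCommGroup M] [SetLike S M]
    [AddSubgroupClass S M] {N : S} (p : ι → Prop) [DecidablePred p] {f : ι → M} {x : M}
    (hp : ∀ i, p i → f i - x ∈ N) (hnp : ∀ i, ¬p i → f i ∈ N) :
    ∑ i, f i - #{i | p i} • x ∈ N := by
  rw [← sum_filter_add_sum_filter_not univ p, ← sum_const, add_sub_right_comm,
    ← sum_sub_distrib]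
  exact add_mem (sum_mem fun i hi ↦ hp i (mem_filter.mp hi).2)
    (sum_mem fun i hi ↦ hnp i (mem_filter.mp hi).2)

theorem exists_smul_eq_self_and_sub_mem_of_sum_sub_nsmul_mem {G A M : Type*} [Group G]
    [Fintype G] [CommRing A] [MulSemiringAction G A] [AddCommGroup M] [Module A M]
    [DistribMulAction G M] (hGM : ∀ (g : G) (a : A) (x : M), g • (a • x) = (g • a) • (g • x))
    {N : Submodule A M} {x : M} {n : ℕ} {u : A} (hu : u * n = 1)
    (hx : ∑ g : G, g • x - n • x ∈ N) : ∃ t : M, (∀ g : G, g • t = t) ∧ t - x ∈ N := by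
  refine ⟨u • ∑ g : G, g • x, fun g ↦ ?_, ?_⟩
  · rw [hGM, smul_eq_self_of_mul_natCast_eq_one g hu, smul_sum_univ_smul]
  · rw [← Nat.cast_smul_eq_nsmul A] at hx
    convert N.smul_mem u hx using 1
    rw [smul_sub, smul_smul, hu, one_smul]

theorem invariant_fiber_element_lifts_to_invariant_section_general
    (k : Type*) [Field k] [CharZero k]
    (A : Type*) [CommRing A] [Algebra k A]
    (G : Type*) [Group G] [Finite G] [MulSemiringAction G A]
    (M : Type*) [AddCommGroup M] [Module A M]
    [DistribMulAction G M]
    (hGM : ∀ (g : G) (a : A) (x : M), g • (a • x) = (g • a) • (g • x))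
    (m : Ideal A) (hm : m.IsMaximal)
    (s : M ⧸ (m • ⊤ : Submodule A M))
    -- `s` is fixed by every element of the stabilizer `G_m`
    (hs : ∀ (g : G), (∀ a : A, g • a ∈ m ↔ a ∈ m) →
      ∀ x : M, Submodule.Quotient.mk x = s → g • x - x ∈ m • (⊤ : Submodule A M)) :
    ∃ t : M, (∀ g : G, g • t = t) ∧ Submodule.Quotient.mk t = s := by
  classical
  have := Fintype.ofFinite G
  obtain ⟨x₀, rfl⟩ := Submodule.Quotient.mk_surjective _ s
  -- `σ g = g⁻¹ • m`, so `σ g = m` exactly when `g ∈ G_m`.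
  set σ : G → Ideal A := fun g ↦ m.comap (MulSemiringAction.toRingHom G A g)
  obtain ⟨b, hb, hbσ⟩ := Ideal.exists_sub_one_mem_and_mem_of_ne (J := σ) hm fun g ↦
    Ideal.comap_isMaximal_of_surjective _ (MulAction.surjective g)
  set x := b • x₀
  have hx : x - x₀ ∈ m • (⊤ : Submodule A M) := by
    rw [← one_smul A x₀, ← sub_smul]
    exact Submodule.smul_mem_smul hb Submodule.mem_top
  have hstab : ∀ g, σ g = m → g • x - x ∈ m • (⊤ : Submodule A M) := fun g hg ↦
    hs g (fun a ↦ SetLike.ext_iff.mp hg a) x ((Submodule.Quotient.eq _).mpr hx)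
  have hmove : ∀ g, σ g ≠ m → g • x ∈ m • (⊤ : Submodule A M) := fun g hg ↦ by
    rw [hGM]
    exact Submodule.smul_mem_smul (hbσ g hg) Submodule.mem_top
  have hσ_one : σ 1 = m := Ideal.ext fun a ↦ by simp [σ]
  have hn : (#{g | σ g = m} : k) ≠ 0 :=
    Nat.cast_ne_zero.mpr (card_ne_zero_of_mem (a := 1) (by simpa using hσ_one))
  obtain ⟨u, hu⟩ := (by simpa using (isUnit_iff_ne_zero.mpr hn).map (algebraMap k A) :
    IsUnit (#{g | σ g = m} : A)).exists_left_inv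
  obtain ⟨t, ht, htx⟩ := exists_smul_eq_self_and_sub_mem_of_sum_sub_nsmul_mem hGM hu
    (sum_sub_card_nsmul_mem _ hstab hmove)
  exact ⟨t, ht, (Submodule.Quotient.eq _).mpr (by simpa using add_mem htx hx)⟩

theorem invariant_fiber_element_lifts_to_invariant_section
    (k : Type*) [Field k] [CharZero k] [IsAlgClosed k]
    (A : Type*) [CommRing A] [Algebra k A] [Algebra.FiniteType k A]
    (G : Type*) [Group G] [Finite G] [MulSemiringAction G A] [SMulCommClass G k A]
    (M : Type*) [AddCommGroup M] [Module A M] [Module.Finite A M]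
    [DistribMulAction G M]
    (hGM : ∀ (g : G) (a : A) (x : M), g • (a • x) = (g • a) • (g • x))
    (m : Ideal A) (hm : m.IsMaximal)
    (s : M ⧸ (m • ⊤ : Submodule A M))
    -- `s` is fixed by every element of the stabilizer `G_m`
    (hs : ∀ (g : G), (∀ a : A, g • a ∈ m ↔ a ∈ m) →
      ∀ x : M, Submodule.Quotient.mk x = s → g • x - x ∈ m • (⊤ : Submodule A M)) :
    ∃ t : M, (∀ g : G, g • t = t) ∧ Submodule.Quotient.mk t = s :=
  invariant_fiber_element_lifts_to_invariant_section_general k A G M hGM m hm s hs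
end

section
/- Let k be an algebraically closed field of characteristic zero, A a finitely generated commutative k-algebra, G a finite group acting on A by k-algebra automorphisms, and M a finitely generated G-equivariant A-module. If for every maximal ideal m of A the stabilizer G_m acts trivially on M ⊗_A A/m, then M is generated as an A-module by its G-invariant elements M^G; in particular there exist finitely many G-invariant elements of M that generate M as an A-module. -/
/-!
Fix a maximal ideal `m` and pick `a ∉ m` with `g • a ∈ m` for every `g` outside the
stabilizer `G_m` (a product of separating elements). For `x : M`, the Reynolds sum
`∑ g, g • (a • x)` is invariant; modulo `m • M` its terms with `g ∉ G_m` vanish and those with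
`g ∈ G_m` equal `a • x`, so it is congruent to `|G_m| • a • x`. Since `|G_m|` divides the
invertible `|G|` and `a` is invertible modulo `m`, the invariants span `M / m • M`, and a
Nakayama-type argument over all maximal ideals shows that they span `M`.
-/

open scoped Pointwise

open Finset MulAction Submodule

namespace Ideal

variable {A G : Type*} [CommRing A] [Group G] [MulSemiringAction G A]

theorem mem_stabilizer_iff_forall_smul_mem_iff {m : Ideal A} {g : G} :
    g ∈ stabilizer G m ↔ ∀ a : A, g • a ∈ m ↔ a ∈ m := by
  rw [← inv_mem_iff, mem_stabilizer_iff, SetLike.ext_iff]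
  simp only [mem_inv_pointwise_smul_iff]

theorem exists_notMem_smul_mem_of_notMem_stabilizer {m : Ideal A} [m.IsMaximal] {g : G}
    (hg : g ∉ stabilizer G m) : ∃ c ∉ m, g • c ∈ m := by
  have hmax : (g⁻¹ • m).IsMaximal := by
    rw [pointwise_smul_eq_comap]
    infer_instance
  have hne : g⁻¹ • m ≠ m := fun h => hg (inv_mem_iff.mp h)
  obtain ⟨c, hc, hcm⟩ :=
    SetLike.not_le_iff_exists.mp fun hle => hne (hmax.eq_of_le ‹m.IsMaximal›.ne_top hle)
  exact ⟨c, hcm, mem_inv_pointwise_smul_iff.mp hc⟩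

theorem exists_notMem_forall_smul_mem_of_notMem_stabilizer [Fintype G] (m : Ideal A)
    [m.IsMaximal] : ∃ a ∉ m, ∀ g ∉ stabilizer G m, g • a ∈ m := by
  have (g : G) : ∃ c ∉ m, g ∉ stabilizer G m → g • c ∈ m := by
    by_cases hg : g ∈ stabilizer G m
    · exact ⟨1, m.one_notMem, absurd hg⟩
    · obtain ⟨c, hc, hgc⟩ := exists_notMem_smul_mem_of_notMem_stabilizer hg
      exact ⟨c, hc, fun _ => hgc⟩
  choose c hc hgc using this
  refine ⟨∏ g, c g, fun h => ?_, fun g hg => ?_⟩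
  · obtain ⟨g, -, hg⟩ := IsPrime.prod_mem_iff.mp h
    exact hc g hg
  · rw [smul_prod']
    exact IsPrime.prod_mem_iff.mpr ⟨g, mem_univ g, hgc g hg⟩

end Ideal

section Averaging

variable {G M : Type*} [Group G] [Fintype G]

theorem sum_smul_mem_fixedPoints [AddCommMonoid M] [DistribMulAction G M] (x : M) :
    ∑ g : G, g • x ∈ fixedPoints G M := fun h => by
  rw [smul_sum]
  simp_rw [smul_smul]
  exact Fintype.sum_equiv (Equiv.mulLeft h) _ _ fun _ => rfl

theorem sum_smul_sub_card_smul_mem [AddCommGroup M] [MulAction G M] (P : AddSubgroup M)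
    (H : Subgroup G) {x : M} (hH : ∀ g ∈ H, g • x - x ∈ P) (hHc : ∀ g ∉ H, g • x ∈ P) :
    ∑ g : G, g • x - Nat.card H • x ∈ P := by
  classical
  have hcard : Nat.card H = #{g | g ∈ H} := by
    rw [Nat.card_eq_fintype_card, Fintype.card_subtype]
  have hsplit : ∑ g : G, g • x - Nat.card H • x =
      ∑ g ∈ {g | g ∈ H}, (g • x - x) + ∑ g ∈ {g | g ∉ H}, g • x := by
    rw [sum_sub_distrib, sum_const, hcard,
      ← sum_filter_add_sum_filter_not univ (· ∈ H)]
    abel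
  rw [hsplit]
  exact P.add_mem (P.sum_mem fun g hg => hH g (mem_filter.mp hg).2)
    (P.sum_mem fun g hg => hHc g (mem_filter.mp hg).2)

end Averaging

namespace Submodule

variable {A M : Type*} [CommRing A] [AddCommGroup M] [Module A M]

theorem mem_of_smul_mem_of_smul_top_le {m : Ideal A} [m.IsMaximal]
    {N : Submodule A M} (hN : m • ⊤ ≤ N) {b : A} (hb : b ∉ m) {x : M} (hx : b • x ∈ N) :
    x ∈ N := by
  obtain ⟨u, v, hv, huv⟩ := ‹m.IsMaximal›.exists_inv hb
  have hx' : x = u • b • x + v • x := by rw [smul_smul, ← add_smul, huv, one_smul]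
  rw [hx']
  exact N.add_mem (N.smul_mem u hx) (hN (smul_mem_smul hv mem_top))

theorem eq_top_of_forall_isMaximal_sup_smul_top_eq_top [Module.Finite A M]
    {N : Submodule A M} (h : ∀ m : Ideal A, m.IsMaximal → N ⊔ m • ⊤ = ⊤) : N = ⊤ := by
  by_contra hN
  obtain ⟨P, hP, hNP⟩ := (eq_top_or_exists_le_coatom N).resolve_left hN
  have : IsSimpleModule A (M ⧸ P) := isSimpleModule_iff_isCoatom.mpr hP
  have hann : Module.annihilator A (M ⧸ P) • ⊤ ≤ P := smul_le.mpr fun r hr y _ => by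
    rw [← Quotient.mk_eq_zero, Quotient.mk_smul]
    exact Module.mem_annihilator.mp hr _
  have hmax := IsSimpleModule.annihilator_isMaximal (R := A) (M := M ⧸ P)
  exact hP.1 (top_le_iff.mp (h _ hmax ▸ sup_le hNP hann))

end Submodule

theorem span_fixedPoints_sup_smul_top_eq_top {A G M : Type*} [CommRing A] [Group G] [Fintype G]
    [MulSemiringAction G A] [AddCommGroup M] [Module A M] [DistribMulAction G M]
    [SMulDistribClass G A M] (hG : IsUnit (Nat.card G : A)) (m : Ideal A) [m.IsMaximal]
    (hm : ∀ g ∈ stabilizer G m, ∀ y : M, g • y - y ∈ m • (⊤ : Submodule A M)) :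
    span A (fixedPoints G M) ⊔ m • ⊤ = ⊤ := by
  set H := stabilizer G m
  set N := span A (fixedPoints G M) ⊔ m • ⊤
  obtain ⟨a, ha, haH⟩ := Ideal.exists_notMem_forall_smul_mem_of_notMem_stabilizer (G := G) m
  have hH : IsUnit (Nat.card H : A) :=
    isUnit_of_dvd_unit (Nat.cast_dvd_cast (Subgroup.card_subgroup_dvd_card H)) hG
  have hnot : (Nat.card H : A) * a ∉ m :=
    Ideal.IsPrime.mul_notMem inferInstance (m.notMem_of_isUnit hH) ha
  refine eq_top_iff.mpr fun x _ => mem_of_smul_mem_of_smul_top_le le_sup_right hnot ?_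
  have hdev : ∑ g : G, g • (a • x) - Nat.card H • (a • x) ∈ (m • ⊤ : Submodule A M) :=
    sum_smul_sub_card_smul_mem (m • ⊤ : Submodule A M).toAddSubgroup H
      (fun g hg => hm g hg _) fun g hg => by
        rw [smul_distrib_smul]
        exact smul_mem_smul (haH g hg) mem_top
  have hcong := N.sub_mem (mem_sup_left (subset_span (sum_smul_mem_fixedPoints (a • x))))
    (mem_sup_right hdev)
  rwa [sub_sub_cancel, ← Nat.cast_smul_eq_nsmul A, smul_smul] at hcong

theorem generated_by_invariants_of_trivial_isotropy_on_fibers_general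
    (k : Type*) [Field k] [CharZero k]
    (A : Type*) [CommRing A] [Algebra k A]
    (G : Type*) [Group G] [Finite G] [MulSemiringAction G A]
    (M : Type*) [AddCommGroup M] [Module A M] [Module.Finite A M]
    [DistribMulAction G M]
    (hGM : ∀ (g : G) (a : A) (x : M), g • (a • x) = (g • a) • (g • x))
    -- for every maximal ideal `m`, the stabilizer `G_m` acts trivially on `M ⊗ A/m`
    (h : ∀ (m : Ideal A), m.IsMaximal →
      ∀ (g : G), (∀ a : A, g • a ∈ m ↔ a ∈ m) →
        ∀ y : M, g • y - y ∈ m • (⊤ : Submodule A M)) :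
    Submodule.span A {x : M | ∀ g : G, g • x = x} = ⊤ ∧
    ∃ S : Finset M, (∀ x ∈ S, ∀ g : G, g • x = x) ∧
      Submodule.span A (S : Set M) = ⊤ := by
  have : Fintype G := Fintype.ofFinite G
  have : SMulDistribClass G A M := ⟨hGM⟩
  have hG : IsUnit (Nat.card G : A) := by
    have hk : (Nat.card G : k) ≠ 0 := Nat.cast_ne_zero.mpr Nat.card_pos.ne'
    simpa only [map_natCast] using (IsUnit.mk0 _ hk).map (algebraMap k A)
  have hspan : span A (fixedPoints G M) = ⊤ :=
    eq_top_of_forall_isMaximal_sup_smul_top_eq_top fun m _ =>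
      span_fixedPoints_sup_smul_top_eq_top hG m fun g hg =>
        h m ‹_› g (Ideal.mem_stabilizer_iff_forall_smul_mem_iff.mp hg)
  obtain ⟨S, hS, hSspan⟩ :=
    (fg_span_iff_fg_span_finset_subset _).mp (hspan ▸ Module.Finite.fg_top)
  exact ⟨hspan, S, fun x hx => hS hx, hSspan ▸ hspan⟩

theorem generated_by_invariants_of_trivial_isotropy_on_fibers
    (k : Type*) [Field k] [CharZero k] [IsAlgClosed k]
    (A : Type*) [CommRing A] [Algebra k A] [Algebra.FiniteType k A]
    (G : Type*) [Group G] [Finite G] [MulSemiringAction G A] [SMulCommClass G k A]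
    (M : Type*) [AddCommGroup M] [Module A M] [Module.Finite A M]
    [DistribMulAction G M]
    (hGM : ∀ (g : G) (a : A) (x : M), g • (a • x) = (g • a) • (g • x))
    -- for every maximal ideal `m`, the stabilizer `G_m` acts trivially on `M ⊗ A/m`
    (h : ∀ (m : Ideal A), m.IsMaximal →
      ∀ (g : G), (∀ a : A, g • a ∈ m ↔ a ∈ m) →
        ∀ y : M, g • y - y ∈ m • (⊤ : Submodule A M)) :
    Submodule.span A {x : M | ∀ g : G, g • x = x} = ⊤ ∧
    ∃ S : Finset M, (∀ x ∈ S, ∀ g : G, g • x = x) ∧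
      Submodule.span A (S : Set M) = ⊤ :=
  generated_by_invariants_of_trivial_isotropy_on_fibers_general k A G M hGM h
end

section
/- Let k be a field of characteristic zero with algebraic closure k̄, A a finitely generated commutative k-algebra, G a finite group acting on A by k-algebra automorphisms, and E a bounded-above cochain complex of finitely generated projective A-modules with G-equivariant structures on the terms and G-equivariant differentials. Suppose that for every maximal ideal n of A and every integer j, H^j(E ⊗_A A/n) is generated as an A/n-module by G_n-fixed elements. Let A_k̄ = A ⊗_k k̄ and E_k̄ = E ⊗_k k̄, with G acting through the A-factors. Then for every maximal ideal x of A_k̄ and every integer j, the stabilizer G_x = {g ∈ G : g•x = x} fixes every element of H^j(E_k̄ ⊗_{A_k̄} A_k̄/x). -/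
/-!
STATEMENT 13: let `k` be a field of characteristic zero with algebraic
closure `K`, `A` a finitely generated commutative `k`-algebra, `G` a finite
group acting on `A` by `k`-algebra automorphisms, and `E` a bounded-above
`G`-equivariant cochain complex of finitely generated projective `A`-modules.
Suppose that for every maximal ideal `n` of `A` and every `j` the cohomology
`H^j(E ⊗[A] A/n)` is generated by `G_n`-fixed elements.  Then for every
maximal ideal `x` of `A_K := A ⊗[k] K` and every `j`, the stabilizer `G_x`
fixes every element of `H^j(E_K ⊗[A_K] A_K/x)`, where `E_K = E ⊗[k] K` is the
base-changed complex, realized termwise as `(A ⊗[k] K) ⊗[A] E^j` (canonically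
isomorphic to `E^j ⊗[k] K`), with base-changed differentials.

Conventions: cohomology of fibers is handled elementwise, fibers at a maximal
ideal `m` being quotients by `m • ⊤`; "`g` fixes the class in `H^j` of a
mod-`m` cocycle `y`" reads `g • y - y ∈ range(d^{j-1}) ⊔ m • ⊤`.
-/

open TensorProduct

universe u v w

/-- A (`ℤ`-indexed, cohomologically graded) cochain complex of `R`-modules,
with differentials indexed by pairs `(i, j)` with `i + 1 = j`. -/
structure ModComplex.{s, r} (R : Type s) [Ring R] : Type (max s (r + 1)) where
  X : ℤ → Type r
  [acg : ∀ j, AddCommGroup (X j)]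
  [mod : ∀ j, Module R (X j)]
  d : ∀ i j : ℤ, i + 1 = j → (X i →ₗ[R] X j)
  d_comp_d : ∀ (i j l : ℤ) (hij : i + 1 = j) (hjl : j + 1 = l) (x : X i),
    d j l hjl (d i j hij x) = 0

attribute [instance] ModComplex.acg ModComplex.mod

/-- A `G`-equivariant cochain complex of `A`-modules: each term carries a
`G`-action compatible with the `G`-action on `A`, and the differentials are
`G`-equivariant. -/
structure EqvModComplex.{s, t, r} (A : Type s) (G : Type t) [CommRing A]
    [Group G] [MulSemiringAction G A] : Type (max s t (r + 1)) where
  X : ℤ → Type r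
  [acg : ∀ j, AddCommGroup (X j)]
  [mod : ∀ j, Module A (X j)]
  [act : ∀ j, DistribMulAction G (X j)]
  equivariant : ∀ (j : ℤ) (g : G) (a : A) (x : X j),
    g • (a • x) = (g • a) • (g • x)
  d : ∀ i j : ℤ, i + 1 = j → (X i →ₗ[A] X j)
  d_comp_d : ∀ (i j l : ℤ) (hij : i + 1 = j) (hjl : j + 1 = l) (x : X i),
    d j l hjl (d i j hij x) = 0
  d_equivariant : ∀ (i j : ℤ) (h : i + 1 = j) (g : G) (x : X i),
    d i j h (g • x) = g • d i j h x

attribute [instance] EqvModComplex.acg EqvModComplex.mod EqvModComplex.act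


section BaseChange

variable (k : Type*) [Field k] (K : Type*) [Field K] [Algebra k K]
variable (A : Type u) [CommRing A] [Algebra k A]
variable (G : Type w) [Group G] [MulSemiringAction G A] [SMulCommClass G k A]

/-- The `G`-action on `A ⊗[k] K` through the factor `A`. -/
noncomputable instance baseChangeAction : MulSemiringAction G (A ⊗[k] K) where
  smul g := Algebra.TensorProduct.map (MulSemiringAction.toAlgHom k A g) (AlgHom.id k K)
  one_smul t := by
    show Algebra.TensorProduct.map (MulSemiringAction.toAlgHom k A 1) (AlgHom.id k K) t = t
    induction t with
    | zero => simp
    | tmul a c => simp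
    | add x y hx hy => rw [map_add, hx, hy]
  mul_smul g h t := by
    show Algebra.TensorProduct.map (MulSemiringAction.toAlgHom k A (g * h)) (AlgHom.id k K) t
      = Algebra.TensorProduct.map (MulSemiringAction.toAlgHom k A g) (AlgHom.id k K)
        (Algebra.TensorProduct.map (MulSemiringAction.toAlgHom k A h) (AlgHom.id k K) t)
    induction t with
    | zero => simp
    | tmul a c => simp [mul_smul]
    | add x y hx hy => rw [map_add, map_add, map_add, hx, hy]
  smul_zero g := map_zero _
  smul_add g := map_add _
  smul_one g := map_one _
  smul_mul g := map_mul _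

@[simp] theorem baseChange_smul_tmul (g : G) (a : A) (c : K) :
    g • (a ⊗ₜ[k] c : A ⊗[k] K) = (g • a) ⊗ₜ[k] c := by
  show Algebra.TensorProduct.map (MulSemiringAction.toAlgHom k A g) (AlgHom.id k K) (a ⊗ₜ[k] c)
    = (g • a) ⊗ₜ[k] c
  simp

theorem baseChange_smul_algebraMap (g : G) (a : A) :
    g • (algebraMap A (A ⊗[k] K) a) = algebraMap A (A ⊗[k] K) (g • a) := by
  rw [Algebra.TensorProduct.algebraMap_apply, Algebra.TensorProduct.algebraMap_apply,
    baseChange_smul_tmul]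
  simp

variable (M : Type v) [AddCommGroup M] [Module A M] [DistribMulAction G M]

/-- The action of `g : G` on `M ⊗_k K`, realized as `(A ⊗[k] K) ⊗[A] M`:
`g • (b ⊗ x) = (g • b) ⊗ (g • x)`. -/
noncomputable def bcModSmul
    (hGM : ∀ (g : G) (a : A) (x : M), g • (a • x) = (g • a) • (g • x)) (g : G) :
    ((A ⊗[k] K) ⊗[A] M) →+ ((A ⊗[k] K) ⊗[A] M) :=
  TensorProduct.liftAddHom
    { toFun := fun b =>
        { toFun := fun x => (g • b) ⊗ₜ[A] (g • x)
          map_zero' := by simp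
          map_add' := fun x y => by simp [TensorProduct.tmul_add] }
      map_zero' := by ext x; simp
      map_add' := fun b b' => by ext x; simp [TensorProduct.add_tmul] }
    (fun a b x => by
      simp only [AddMonoidHom.coe_mk, ZeroHom.coe_mk]
      rw [show g • (a • b) = (g • a) • (g • b) from by
            rw [Algebra.smul_def, smul_mul', baseChange_smul_algebraMap, ← Algebra.smul_def],
        TensorProduct.smul_tmul, hGM]) 

end BaseChange

section More

variable (k : Type*) [Field k] (K : Type*) [Field K] [Algebra k K]
variable (A : Type u) [CommRing A] [Algebra k A]
variable (G : Type w) [Group G] [MulSemiringAction G A] [SMulCommClass G k A]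
variable (M : Type v) [AddCommGroup M] [Module A M] [DistribMulAction G M]
variable (hGM : ∀ (g : G) (a : A) (x : M), g • (a • x) = (g • a) • (g • x))

@[simp] theorem bcModSmul_tmul (g : G) (b : A ⊗[k] K) (x : M) :
    bcModSmul k K A G M hGM g (b ⊗ₜ[A] x) = (g • b) ⊗ₜ[A] (g • x) :=
  TensorProduct.liftAddHom_tmul _ _ _ _

/-- `g`-semilinearity of the `G`-action on `(A ⊗[k] K) ⊗[A] M` over the
`G`-action on `A ⊗[k] K`. -/
theorem bcModSmul_smul (g : G) (b : A ⊗[k] K) (t : (A ⊗[k] K) ⊗[A] M) :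
    bcModSmul k K A G M hGM g (b • t) = (g • b) • bcModSmul k K A G M hGM g t := by
  induction t with
  | zero => simp
  | tmul b' x =>
      rw [TensorProduct.smul_tmul', bcModSmul_tmul, bcModSmul_tmul,
        TensorProduct.smul_tmul', smul_eq_mul, smul_eq_mul, smul_mul']
  | add s t hs ht => rw [smul_add, map_add, hs, ht, map_add, smul_add]

end More

section Claim

universe uA uB uM uN

variable {A : Type uA} [CommRing A] {B : Type uB} [CommRing B] [Algebra A B]
variable {M : Type uM} [AddCommGroup M] [Module A M]
variable {N : Type uN} [AddCommGroup N] [Module A N]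

lemma one_tmul_mem_of_mem_smul (x : Ideal B) (n : Ideal A)
    (hle : ∀ a : A, a ∈ n → algebraMap A B a ∈ x)
    {z : M} (hz : z ∈ n • (⊤ : Submodule A M)) :
    (1 : B) ⊗ₜ[A] z ∈ x • (⊤ : Submodule B (B ⊗[A] M)) := by
  refine Submodule.smul_induction_on hz (fun a ha m _ => ?_) (fun u v hu hv => ?_)
  · have h1 : (1 : B) ⊗ₜ[A] (a • m) = (algebraMap A B a) • ((1:B) ⊗ₜ[A] m) := by
      rw [TensorProduct.tmul_smul, algebraMap_smul]
    rw [h1]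
    exact Submodule.smul_mem_smul (hle a ha) Submodule.mem_top
  · rw [TensorProduct.tmul_add]; exact Submodule.add_mem _ hu hv

lemma baseChange_mem_smul_top (x : Ideal B) (f : M →ₗ[A] N)
    {t : B ⊗[A] M} (ht : t ∈ x • (⊤ : Submodule B (B ⊗[A] M))) :
    f.baseChange B t ∈ x • (⊤ : Submodule B (B ⊗[A] N)) := by
  refine Submodule.smul_induction_on ht (fun b hb u _ => ?_) (fun u v hu hv => ?_)
  · rw [map_smul]; exact Submodule.smul_mem_smul hb Submodule.mem_top
  · rw [map_add]; exact Submodule.add_mem _ hu hv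

set_option maxHeartbeats 2000000 in
lemma fiber_kernel_span (f : M →ₗ[A] N) (x : Ideal B) (n : Ideal A) [hnm : n.IsMaximal]
    (hle : ∀ a : A, a ∈ n → algebraMap A B a ∈ x)
    (y : B ⊗[A] M) (hy : f.baseChange B y ∈ x • (⊤ : Submodule B (B ⊗[A] N))) :
    y ∈ Submodule.span B ((fun z => (1:B) ⊗ₜ[A] z) ''
        {z : M | f z ∈ n • (⊤ : Submodule A N)})
      ⊔ x • (⊤ : Submodule B (B ⊗[A] M)) := by
  classical
  letI : Field (A ⧸ n) := Ideal.Quotient.field n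
  have hmap : (n • ⊤ : Submodule A M) ≤ Submodule.comap f (n • ⊤ : Submodule A N) := by
    rw [← Submodule.map_le_iff_le_comap, Submodule.map_smul'']
    exact Submodule.smul_mono le_rfl le_top
  set fbar0 := Submodule.mapQ (n • ⊤ : Submodule A M) (n • ⊤ : Submodule A N) f hmap with hfbar0
  set fbar : (M ⧸ (n • ⊤ : Submodule A M)) →ₗ[A ⧸ n] (N ⧸ (n • ⊤ : Submodule A N)) :=
    { toFun := fbar0
      map_add' := map_add _
      map_smul' := by
        rintro c v
        obtain ⟨a, rfl⟩ := Ideal.Quotient.mk_surjective c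
        obtain ⟨m, rfl⟩ := Submodule.Quotient.mk_surjective _ v
        show fbar0 _ = _
        rw [Module.Quotient.mk_smul_mk, Submodule.mapQ_apply, map_smul,
          ← Module.Quotient.mk_smul_mk]
        simp [fbar0, Submodule.mapQ_apply] } with hfbar
  have hfbar_mk : ∀ m : M,
      fbar (Submodule.Quotient.mk m) = Submodule.Quotient.mk (f m) := by
    intro m; show fbar0 _ = _; rw [Submodule.mapQ_apply]
  obtain ⟨C, hC⟩ := Submodule.exists_isCompl (LinearMap.ker fbar)
  set bK := Module.Basis.ofVectorSpace (A ⧸ n) (LinearMap.ker fbar) with hbK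
  set bC := Module.Basis.ofVectorSpace (A ⧸ n) C with hbC
  set bV := (bK.prod bC).map (Submodule.prodEquivOfIsCompl _ C hC) with hbV
  have hbl : ∀ i, bV (Sum.inl i) ∈ LinearMap.ker fbar := by
    intro i
    have h : bV (Sum.inl i) = (bK i : _) := by
      rw [hbV, Module.Basis.map_apply, Module.Basis.prod_apply]
      simp [Submodule.coe_prodEquivOfIsCompl]
    rw [h]; exact (bK i).2
  have hbr : ∀ i, bV (Sum.inr i) ∈ C := by
    intro i
    have h : bV (Sum.inr i) = (bC i : _) := by
      rw [hbV, Module.Basis.map_apply, Module.Basis.prod_apply]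
      simp [Submodule.coe_prodEquivOfIsCompl]
    rw [h]; exact (bC i).2
  have hzex : ∀ i, ∃ m : M, Submodule.Quotient.mk m = bV i :=
    fun i => Submodule.Quotient.mk_surjective _ (bV i)
  choose zf hzf using hzex
  -- every 1 ⊗ m lies in span of the 1 ⊗ zf i together with x • ⊤
  have hspan : ∀ m : M, (1:B) ⊗ₜ[A] m ∈
      Submodule.span B (Set.range fun i => (1:B) ⊗ₜ[A] zf i)
        ⊔ x • (⊤ : Submodule B (B ⊗[A] M)) := by
    intro m
    have hm : (Submodule.Quotient.mk m : M ⧸ (n • ⊤ : Submodule A M)) ∈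
        Submodule.span (A ⧸ n) (Set.range bV) := by
      rw [bV.span_eq]; trivial
    refine Submodule.span_induction
      (p := fun w _ => ∀ m' : M, Submodule.Quotient.mk m' = w →
        (1:B) ⊗ₜ[A] m' ∈ Submodule.span B (Set.range fun i => (1:B) ⊗ₜ[A] zf i)
          ⊔ x • (⊤ : Submodule B (B ⊗[A] M)))
      ?_ ?_ ?_ ?_ hm m rfl
    · rintro w ⟨i, rfl⟩ m' hm'
      have hdiff : m' - zf i ∈ (n • ⊤ : Submodule A M) := by
        rw [← Submodule.Quotient.mk_eq_zero, Submodule.Quotient.mk_sub, hm', hzf, sub_self]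
      have hsplit : (1:B) ⊗ₜ[A] m' = (1:B) ⊗ₜ[A] (zf i) + (1:B) ⊗ₜ[A] (m' - zf i) := by
        rw [← TensorProduct.tmul_add]; congr 1; abel
      rw [hsplit]
      exact Submodule.add_mem _
        (Submodule.mem_sup_left (Submodule.subset_span ⟨i, rfl⟩))
        (Submodule.mem_sup_right (one_tmul_mem_of_mem_smul x n hle hdiff))
    · intro m' hm'
      have hmem : m' ∈ (n • ⊤ : Submodule A M) := by
        rwa [← Submodule.Quotient.mk_eq_zero]
      exact Submodule.mem_sup_right (one_tmul_mem_of_mem_smul x n hle hmem)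
    · rintro w₁ w₂ hw₁ hw₂ ih₁ ih₂ m' hm'
      obtain ⟨m₁, hm₁⟩ := Submodule.Quotient.mk_surjective _ w₁
      have h2 : (Submodule.Quotient.mk (m' - m₁) : M ⧸ (n • ⊤ : Submodule A M)) = w₂ := by
        rw [Submodule.Quotient.mk_sub, hm', hm₁]; abel
      have hsplit : (1:B) ⊗ₜ[A] m' = (1:B) ⊗ₜ[A] m₁ + (1:B) ⊗ₜ[A] (m' - m₁) := by
        rw [← TensorProduct.tmul_add]; congr 1; abel
      rw [hsplit]
      exact Submodule.add_mem _ (ih₁ m₁ hm₁) (ih₂ _ h2)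
    · rintro c w hw ih m' hm'
      obtain ⟨a, rfl⟩ := Ideal.Quotient.mk_surjective c
      obtain ⟨m₀, hm₀⟩ := Submodule.Quotient.mk_surjective _ w
      have hdiff : m' - a • m₀ ∈ (n • ⊤ : Submodule A M) := by
        rw [← Submodule.Quotient.mk_eq_zero, Submodule.Quotient.mk_sub, hm',
          ← hm₀, Module.Quotient.mk_smul_mk, sub_self]
      have hsplit : (1:B) ⊗ₜ[A] m' =
          (algebraMap A B a) • ((1:B) ⊗ₜ[A] m₀) + (1:B) ⊗ₜ[A] (m' - a • m₀) := by
        rw [algebraMap_smul, ← TensorProduct.tmul_smul, ← TensorProduct.tmul_add]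
        congr 1; abel
      rw [hsplit]
      exact Submodule.add_mem _
        (Submodule.smul_mem _ _ (ih m₀ hm₀))
        (Submodule.mem_sup_right (one_tmul_mem_of_mem_smul x n hle hdiff))
  -- y lies in the span of the 1 ⊗ zf i together with x • ⊤
  have hy1 : y ∈ Submodule.span B (Set.range fun i => (1:B) ⊗ₜ[A] zf i)
      ⊔ x • (⊤ : Submodule B (B ⊗[A] M)) := by
    have htop : ∀ t : B ⊗[A] M, t ∈ Submodule.span B (Set.range fun i => (1:B) ⊗ₜ[A] zf i)
        ⊔ x • (⊤ : Submodule B (B ⊗[A] M)) := by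
      intro t
      induction t with
      | zero => exact Submodule.zero_mem _
      | tmul b m =>
          have hb : b ⊗ₜ[A] m = b • ((1:B) ⊗ₜ[A] m) := by
            rw [TensorProduct.smul_tmul', smul_eq_mul, mul_one]
          rw [hb]
          exact Submodule.smul_mem _ _ (hspan m)
      | add u v hu hv => exact Submodule.add_mem _ hu hv
    exact htop y
  -- split the range of the index
  have hrange : (Set.range fun i => (1:B) ⊗ₜ[A] zf i) =
      (Set.range fun i => (1:B) ⊗ₜ[A] zf (Sum.inl i)) ∪
      (Set.range fun i => (1:B) ⊗ₜ[A] zf (Sum.inr i)) := by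
    ext t
    constructor
    · rintro ⟨i, rfl⟩
      cases i with
      | inl i => exact Or.inl ⟨i, rfl⟩
      | inr i => exact Or.inr ⟨i, rfl⟩
    · rintro (⟨i, rfl⟩ | ⟨i, rfl⟩)
      exacts [⟨Sum.inl i, rfl⟩, ⟨Sum.inr i, rfl⟩]
  rw [hrange, Submodule.span_union, sup_assoc] at hy1
  obtain ⟨p₁, hp₁, rest, hrest, hsum⟩ := Submodule.mem_sup.mp hy1
  obtain ⟨p₂, hp₂, q, hq, hsum2⟩ := Submodule.mem_sup.mp hrest
  -- the inl-part generators are genuine mod-n cocycles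
  have hfzl : ∀ i, f (zf (Sum.inl i)) ∈ (n • ⊤ : Submodule A N) := by
    intro i
    rw [← Submodule.Quotient.mk_eq_zero]
    have h1 : (Submodule.Quotient.mk (f (zf (Sum.inl i))) :
        N ⧸ (n • ⊤ : Submodule A N)) = fbar (Submodule.Quotient.mk (zf (Sum.inl i))) :=
      (hfbar_mk _).symm
    rw [h1, hzf]
    exact hbl i
  have hp₁good : p₁ ∈ Submodule.span B ((fun z => (1:B) ⊗ₜ[A] z) ''
      {z : M | f z ∈ n • (⊤ : Submodule A N)}) := by
    refine Submodule.span_mono ?_ hp₁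
    rintro _ ⟨i, rfl⟩
    exact ⟨zf (Sum.inl i), hfzl i, rfl⟩
  have hbc_p₁ : f.baseChange B p₁ ∈ x • (⊤ : Submodule B (B ⊗[A] N)) := by
    have hle2 : Submodule.span B (Set.range fun i => (1:B) ⊗ₜ[A] zf (Sum.inl i)) ≤
        Submodule.comap (f.baseChange B) (x • (⊤ : Submodule B (B ⊗[A] N))) := by
      refine Submodule.span_le.mpr ?_
      rintro _ ⟨i, rfl⟩
      simp only [SetLike.mem_coe, Submodule.mem_comap, LinearMap.baseChange_tmul]
      exact one_tmul_mem_of_mem_smul x n hle (hfzl i)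
    exact hle2 hp₁
  have hbc_q : f.baseChange B q ∈ x • (⊤ : Submodule B (B ⊗[A] N)) :=
    baseChange_mem_smul_top x f hq
  have hyeq : p₂ = y - p₁ - q := by rw [← hsum, ← hsum2]; abel
  have hbc_p₂ : f.baseChange B p₂ ∈ x • (⊤ : Submodule B (B ⊗[A] N)) := by
    rw [hyeq, map_sub, map_sub]
    exact Submodule.sub_mem _ (Submodule.sub_mem _ hy hbc_p₁) hbc_q
  -- linear independence of the images of the complementary basis vectors
  have hw_li : LinearIndependent (A ⧸ n) (fun i => fbar (bV (Sum.inr i))) := by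
    have h1 : LinearIndependent (A ⧸ n) (fun i => bV (Sum.inr i)) :=
      bV.linearIndependent.comp Sum.inr Sum.inr_injective
    have h2 : Submodule.span (A ⧸ n) (Set.range fun i => bV (Sum.inr i)) ≤ C :=
      Submodule.span_le.mpr (by rintro _ ⟨i, rfl⟩; exact hbr i)
    exact h1.map (Disjoint.mono_left h2 hC.disjoint.symm)
  set w := fun i => fbar (bV (Sum.inr i)) with hw
  set bW := Module.Basis.span hw_li with hbW
  obtain ⟨C', hC'⟩ := Submodule.exists_isCompl
    (Submodule.span (A ⧸ n) (Set.range w))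
  set proj := Submodule.linearProjOfIsCompl _ C' hC' with hprojdef
  have hFw : ∀ i i0, (bW.coord i0) (proj (w i)) = if i = i0 then 1 else 0 := by
    intro i i0
    have hmem : w i ∈ Submodule.span (A ⧸ n) (Set.range w) :=
      Submodule.subset_span ⟨i, rfl⟩
    have h1 : proj (w i) = ⟨w i, hmem⟩ :=
      Submodule.linearProjOfIsCompl_apply_left hC' ⟨w i, hmem⟩
    have h2 : (⟨w i, hmem⟩ : Submodule.span (A ⧸ n) (Set.range w)) = bW i := by
      apply Subtype.ext
      rw [hbW, Module.Basis.span_apply]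
    rw [h1, h2, Module.Basis.coord_apply, bW.repr_self, Finsupp.single_apply]
  -- the A-linear functionals into B ⧸ x
  have hnlex : n ≤ x.comap (algebraMap A B) := fun a ha => hle a ha
  set θ0 := Ideal.quotientMap x (algebraMap A B) hnlex with hθ0
  have hsmulL : ∀ (a : A) (ℓ : B ⧸ x),
      a • ℓ = Ideal.Quotient.mk x (algebraMap A B a) * ℓ := by
    intro a ℓ
    rw [Algebra.smul_def, IsScalarTower.algebraMap_apply A B (B ⧸ x),
      Ideal.Quotient.algebraMap_eq]
  set Φ : _ → (N →ₗ[A] B ⧸ x) := fun i0 =>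
    { toFun := fun nn => θ0 ((bW.coord i0) (proj (Submodule.Quotient.mk nn)))
      map_add' := fun n1 n2 => by
        simp only [Submodule.Quotient.mk_add, map_add]
      map_smul' := fun a nn => by
        show θ0 _ = a • θ0 _
        rw [← Module.Quotient.mk_smul_mk, map_smul, map_smul, smul_eq_mul,
          map_mul, Ideal.quotientMap_mk, hsmulL] } with hΦ
  set Ψ : _ → (B ⊗[A] N →ₗ[B] B ⧸ x) := fun i0 => (Φ i0).liftBaseChange B with hΨ
  have hΨ0 : ∀ i0, ∀ t ∈ x • (⊤ : Submodule B (B ⊗[A] N)), Ψ i0 t = 0 := by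
    intro i0 t ht
    refine Submodule.smul_induction_on ht (fun b hb u _ => ?_) (fun u v hu hv => ?_)
    · rw [map_smul, Algebra.smul_def, Ideal.Quotient.algebraMap_eq,
        Ideal.Quotient.eq_zero_iff_mem.mpr hb, zero_mul]
    · rw [map_add, hu, hv, add_zero]
  have hΨval : ∀ i0 i, Ψ i0 ((1:B) ⊗ₜ[A] f (zf (Sum.inr i))) =
      if i = i0 then 1 else 0 := by
    intro i0 i
    rw [hΨ]
    show ((Φ i0).liftBaseChange B) _ = _
    rw [LinearMap.liftBaseChange_tmul, one_smul]
    show θ0 ((bW.coord i0) (proj (Submodule.Quotient.mk (f (zf (Sum.inr i)))))) = _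
    have h1 : (Submodule.Quotient.mk (f (zf (Sum.inr i))) :
        N ⧸ (n • ⊤ : Submodule A N)) = w i := by
      rw [hw, ← hfbar_mk, hzf]
    rw [h1, hFw]
    split
    · exact map_one θ0
    · exact map_zero θ0
  -- write p₂ in terms of the inr generators and conclude its coefficients lie in x
  rw [Finsupp.mem_span_range_iff_exists_finsupp] at hp₂
  obtain ⟨c, hc⟩ := hp₂
  have hcoef : ∀ i0, c i0 ∈ x := by
    intro i0
    have h1 : Ψ i0 (f.baseChange B p₂) = 0 := hΨ0 i0 _ hbc_p₂
    have h2 : f.baseChange B p₂ =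
        c.sum fun i ℓ => ℓ • ((1:B) ⊗ₜ[A] f (zf (Sum.inr i))) := by
      rw [← hc, map_finsuppSum]
      refine Finsupp.sum_congr fun i _ => ?_
      rw [map_smul, LinearMap.baseChange_tmul]
    have h3 : Ψ i0 (f.baseChange B p₂) =
        c.sum fun i ℓ => ℓ • (if i = i0 then (1 : B ⧸ x) else 0) := by
      rw [h2, map_finsuppSum]
      refine Finsupp.sum_congr fun i _ => ?_
      rw [map_smul, hΨval]
    have h4 : (c.sum fun i ℓ => ℓ • (if i = i0 then (1 : B ⧸ x) else 0)) =
        c i0 • (1 : B ⧸ x) := by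
      rw [Finsupp.sum]
      refine (Finset.sum_eq_single i0 (fun i _ hne => ?_) (fun hni => ?_)).trans ?_
      · rw [if_neg hne, smul_zero]
      · rw [Finsupp.notMem_support_iff.mp hni, zero_smul]
      · rw [if_pos rfl]
    have h5 : (Ideal.Quotient.mk x (c i0) : B ⧸ x) = 0 := by
      have := h1
      rw [h3, h4] at this
      rwa [Algebra.smul_def, Ideal.Quotient.algebraMap_eq, mul_one] at this
    exact Ideal.Quotient.eq_zero_iff_mem.mp h5
  have hp₂x : p₂ ∈ x • (⊤ : Submodule B (B ⊗[A] M)) := by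
    rw [← hc]
    refine Submodule.sum_mem _ fun i _ => ?_
    exact Submodule.smul_mem_smul (hcoef i) Submodule.mem_top
  have hyfin : y = p₁ + (p₂ + q) := by rw [hsum2, hsum]
  rw [hyfin]
  exact Submodule.add_mem _ (Submodule.mem_sup_left hp₁good)
    (Submodule.mem_sup_right (Submodule.add_mem _ hp₂x hq))

end Claim

section NSS

attribute [local instance] Algebra.TensorProduct.rightAlgebra

variable (k : Type*) [Field k] (K : Type*) [Field K] [Algebra k K]
variable (A : Type u) [CommRing A] [Algebra k A]

set_option maxHeartbeats 800000 in
lemma bc_finiteType [Algebra.FiniteType k A] : Algebra.FiniteType K (A ⊗[k] K) := by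
  classical
  obtain ⟨s, hs⟩ := Algebra.FiniteType.out (R := k) (A := A)
  refine ⟨⟨s.image (fun a => a ⊗ₜ[k] (1:K)), ?_⟩⟩
  rw [eq_top_iff]
  rintro t -
  induction t with
  | zero => exact Subalgebra.zero_mem _
  | add u v hu hv => exact Subalgebra.add_mem _ hu hv
  | tmul a c =>
      have h1 : a ⊗ₜ[k] c = c • (a ⊗ₜ[k] (1:K)) := by
        have h0 : algebraMap K (A ⊗[k] K) c = (1:A) ⊗ₜ[k] c := rfl
        rw [Algebra.smul_def, h0, Algebra.TensorProduct.tmul_mul_tmul, one_mul, mul_one]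
      rw [h1]
      refine Subalgebra.smul_mem _ ?_ c
      have ha : a ∈ Algebra.adjoin k (s : Set A) := by rw [hs]; trivial
      refine Algebra.adjoin_induction (fun y hy => ?_) (fun r => ?_) (fun y z _ _ hy hz => ?_)
        (fun y z _ _ hy hz => ?_) ha
      · exact Algebra.subset_adjoin (Finset.mem_coe.mpr (Finset.mem_image_of_mem _ hy))
      · have : algebraMap k A r ⊗ₜ[k] (1:K) = algebraMap K (A ⊗[k] K) (algebraMap k K r) := by
          rw [← IsScalarTower.algebraMap_apply k K (A ⊗[k] K),
            Algebra.TensorProduct.algebraMap_apply]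
        rw [this]
        exact Subalgebra.algebraMap_mem _ _
      · rw [TensorProduct.add_tmul]; exact Subalgebra.add_mem _ hy hz
      · have : (y * z) ⊗ₜ[k] (1:K) = y ⊗ₜ[k] (1:K) * z ⊗ₜ[k] (1:K) := by
          rw [Algebra.TensorProduct.tmul_mul_tmul, mul_one]
        rw [this]; exact Subalgebra.mul_mem _ hy hz

variable [Algebra.FiniteType k A] (x : Ideal (A ⊗[k] K)) [hx : x.IsMaximal]

lemma nss_residue [IsAlgClosed K] :
    ∀ b : A ⊗[k] K, ∃ c : K, b - (1:A) ⊗ₜ[k] c ∈ x := by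
  haveI := bc_finiteType k K A
  haveI : Algebra.FiniteType K ((A ⊗[k] K) ⧸ x) :=
    this.of_surjective (Ideal.Quotient.mkₐ K x)
      (Ideal.Quotient.mkₐ_surjective K x)
  letI : Field ((A ⊗[k] K) ⧸ x) := Ideal.Quotient.field x
  haveI : Module.Finite K ((A ⊗[k] K) ⧸ x) :=
    finite_of_finite_type_of_isJacobsonRing K _
  haveI : Algebra.IsIntegral K ((A ⊗[k] K) ⧸ x) := Algebra.IsIntegral.of_finite K _
  intro b
  obtain ⟨c, hc⟩ := (IsAlgClosed.algebraMap_bijective_of_isIntegral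
    (k := K)).2 (Ideal.Quotient.mk x b)
  refine ⟨c, ?_⟩
  have h1 : algebraMap K ((A ⊗[k] K) ⧸ x) c = Ideal.Quotient.mk x ((1:A) ⊗ₜ[k] c) := by
    rw [IsScalarTower.algebraMap_apply K (A ⊗[k] K) ((A ⊗[k] K) ⧸ x),
      Ideal.Quotient.algebraMap_eq]
    rfl
  have h2 : Ideal.Quotient.mk x ((1:A) ⊗ₜ[k] c) = Ideal.Quotient.mk x b := by
    rw [← h1, hc]
  exact (Submodule.Quotient.eq x).mp h2.symm

lemma comap_isMaximal [IsAlgClosed K] [Algebra.IsAlgebraic k K] :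
    (x.comap (algebraMap A (A ⊗[k] K))).IsMaximal := by
  haveI := bc_finiteType k K A
  haveI : Algebra.FiniteType K ((A ⊗[k] K) ⧸ x) :=
    this.of_surjective (Ideal.Quotient.mkₐ K x)
      (Ideal.Quotient.mkₐ_surjective K x)
  letI : Field ((A ⊗[k] K) ⧸ x) := Ideal.Quotient.field x
  haveI : Module.Finite K ((A ⊗[k] K) ⧸ x) :=
    finite_of_finite_type_of_isJacobsonRing K _
  haveI : FiniteDimensional K ((A ⊗[k] K) ⧸ x) := ‹_›
  haveI : Algebra.IsAlgebraic K ((A ⊗[k] K) ⧸ x) := Algebra.IsAlgebraic.of_finite K _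
  haveI : Algebra.IsAlgebraic k ((A ⊗[k] K) ⧸ x) :=
    Algebra.IsAlgebraic.trans (R := k) (S := K) (A := (A ⊗[k] K) ⧸ x)
  set n := x.comap (algebraMap A (A ⊗[k] K)) with hn
  let θ : (A ⧸ n) →ₐ[k] ((A ⊗[k] K) ⧸ x) :=
    { toRingHom := Ideal.quotientMap x (algebraMap A (A ⊗[k] K)) le_rfl
      commutes' := by
        intro r
        show Ideal.quotientMap x (algebraMap A (A ⊗[k] K)) le_rfl
          (algebraMap k (A ⧸ n) r) = algebraMap k ((A ⊗[k] K) ⧸ x) r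
        rw [IsScalarTower.algebraMap_apply k A (A ⧸ n), Ideal.Quotient.algebraMap_eq,
          Ideal.quotientMap_mk, ← IsScalarTower.algebraMap_apply k A (A ⊗[k] K),
          IsScalarTower.algebraMap_apply k (A ⊗[k] K) ((A ⊗[k] K) ⧸ x),
          Ideal.Quotient.algebraMap_eq] }
  haveI : Algebra.IsAlgebraic k (A ⧸ n) :=
    Algebra.IsAlgebraic.of_injective θ (Ideal.quotientMap_injective)
  haveI : Algebra.IsIntegral k (A ⧸ n) := Algebra.isAlgebraic_iff_isIntegral.mp this
  exact Ideal.Quotient.maximal_of_isField _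
    (isField_of_isIntegral_of_isField' (Semifield.toIsField k))

end NSS

set_option maxHeartbeats 3200000 in
/-- **Base change of the descent condition to the algebraic closure**
(complexes): condition (2) of the complex-descent theorem over `k` implies
condition (3) over the algebraic closure `K`. -/
theorem complex_generation_condition_implies_trivial_action_after_base_change
    (k : Type*) [Field k] [CharZero k]
    (K : Type*) [Field K] [Algebra k K] [IsAlgClosed K] [Algebra.IsAlgebraic k K]
    (A : Type u) [CommRing A] [Algebra k A] [Algebra.FiniteType k A]
    (G : Type w) [Group G] [Finite G] [MulSemiringAction G A] [SMulCommClass G k A]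
    (E : EqvModComplex.{u, w, v} A G)
    (hproj : ∀ j, Module.Projective A (E.X j))
    (hfin : ∀ j, Module.Finite A (E.X j))
    (hbdd : ∃ b : ℤ, ∀ j, b < j → ∀ x : E.X j, x = 0)
    -- for every maximal ideal `n ⊆ A` and every `j`, `H^j(E ⊗[A] A/n)` is
    -- generated by `G_n`-fixed elements:
    (hyp : ∀ n : Ideal A, n.IsMaximal → ∀ (j : ℤ) (x : E.X j),
      E.d j (j+1) rfl x ∈ n • (⊤ : Submodule A (E.X (j+1))) →
      x ∈ Submodule.span A {y : E.X j |
        E.d j (j+1) rfl y ∈ n • (⊤ : Submodule A (E.X (j+1))) ∧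
        ∀ g : G, (∀ a : A, g • a ∈ n ↔ a ∈ n) →
          g • y - y ∈ LinearMap.range (E.d (j-1) j (by omega)) ⊔
            n • (⊤ : Submodule A (E.X j))}) :
    ∀ x : Ideal (A ⊗[k] K), x.IsMaximal → ∀ (j : ℤ)
      (y : (A ⊗[k] K) ⊗[A] E.X j),
      (E.d j (j+1) rfl).baseChange (A ⊗[k] K) y ∈
        x • (⊤ : Submodule (A ⊗[k] K) ((A ⊗[k] K) ⊗[A] E.X (j+1))) →
      ∀ g : G, (∀ b : A ⊗[k] K, g • b ∈ x ↔ b ∈ x) →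
        bcModSmul k K A G (E.X j) (E.equivariant j) g y - y ∈
          LinearMap.range ((E.d (j-1) j (by omega)).baseChange (A ⊗[k] K)) ⊔
            x • (⊤ : Submodule (A ⊗[k] K) ((A ⊗[k] K) ⊗[A] E.X j)) := by
  intro x hx j y hy g hg
  haveI : x.IsMaximal := hx
  set n := x.comap (algebraMap A (A ⊗[k] K)) with hn
  haveI hnmax : n.IsMaximal := comap_isMaximal k K A x
  have hle : ∀ a : A, a ∈ n → algebraMap A (A ⊗[k] K) a ∈ x := fun a ha => ha
  have hgn : ∀ a : A, g • a ∈ n ↔ a ∈ n := by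
    intro a
    rw [hn, Ideal.mem_comap, Ideal.mem_comap, ← baseChange_smul_algebraMap k K A G g a, hg]
  have hgfix : ∀ b : A ⊗[k] K, g • b - b ∈ x := by
    intro b
    obtain ⟨c, hc⟩ := nss_residue k K A x b
    have h1 : g • ((1:A) ⊗ₜ[k] c) = (1:A) ⊗ₜ[k] c := by
      rw [baseChange_smul_tmul, smul_one]
    have h2 : g • b - b =
        (g • (b - (1:A) ⊗ₜ[k] c) - (b - (1:A) ⊗ₜ[k] c)) + (g • b - g • b) := by
      rw [smul_sub, h1]; abel
    rw [h2]
    have := sub_mem ((hg _).mpr hc) hc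
    simpa using this
  have hkey := fiber_kernel_span (E.d j (j+1) rfl) x n hle y hy
  set GS : Set (E.X j) := {z : E.X j |
      E.d j (j+1) rfl z ∈ n • (⊤ : Submodule A (E.X (j+1))) ∧
      ∀ g' : G, (∀ a : A, g' • a ∈ n ↔ a ∈ n) →
        g' • z - z ∈ LinearMap.range (E.d (j-1) j (by omega)) ⊔
          n • (⊤ : Submodule A (E.X j))} with hGS
  have hrefine : Submodule.span (A ⊗[k] K) ((fun z => (1:A ⊗[k] K) ⊗ₜ[A] z) ''
        {z : E.X j | E.d j (j+1) rfl z ∈ n • (⊤ : Submodule A (E.X (j+1)))}) ≤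
      Submodule.span (A ⊗[k] K) ((fun z => (1:A ⊗[k] K) ⊗ₜ[A] z) '' GS) := by
    rw [Submodule.span_le]
    rintro _ ⟨z, hz, rfl⟩
    have hz2 := hyp n hnmax j z hz
    have h3 : (1:A ⊗[k] K) ⊗ₜ[A] z ∈
        Submodule.map ((TensorProduct.mk A (A ⊗[k] K) (E.X j)) 1)
          (Submodule.span A GS) := ⟨z, hz2, rfl⟩
    rw [Submodule.map_span] at h3
    have h4 := Submodule.span_le_restrictScalars A (A ⊗[k] K)
      ((⇑((TensorProduct.mk A (A ⊗[k] K) (E.X j)) 1)) '' GS) h3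
    exact h4
  set R' := LinearMap.range ((E.d (j-1) j (by omega)).baseChange (A ⊗[k] K)) ⊔
      x • (⊤ : Submodule (A ⊗[k] K) ((A ⊗[k] K) ⊗[A] E.X j)) with hR'
  set Φ := bcModSmul k K A G (E.X j) (E.equivariant j) g with hΦdef
  have hΦx : ∀ t ∈ x • (⊤ : Submodule (A ⊗[k] K) ((A ⊗[k] K) ⊗[A] E.X j)),
      Φ t ∈ x • (⊤ : Submodule (A ⊗[k] K) ((A ⊗[k] K) ⊗[A] E.X j)) := by
    intro t ht
    refine Submodule.smul_induction_on ht (fun b hb u _ => ?_) (fun u v hu hv => ?_)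
    · rw [hΦdef, bcModSmul_smul]
      exact Submodule.smul_mem_smul ((hg b).mpr hb) Submodule.mem_top
    · rw [map_add]; exact Submodule.add_mem _ hu hv
  set U : Submodule (A ⊗[k] K) ((A ⊗[k] K) ⊗[A] E.X j) :=
    { carrier := {u | Φ u - u ∈ R'}
      add_mem' := by
        intro u v hu hv
        have h : Φ (u + v) - (u + v) = (Φ u - u) + (Φ v - v) := by
          rw [map_add]; abel
        show Φ (u + v) - (u + v) ∈ R'
        rw [h]; exact Submodule.add_mem _ hu hv
      zero_mem' := by
        show Φ 0 - 0 ∈ R'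
        rw [map_zero, sub_zero]; exact Submodule.zero_mem _
      smul_mem' := by
        intro b u hu
        show Φ (b • u) - b • u ∈ R'
        have h : Φ (b • u) - b • u = (g • b) • (Φ u - u) + (g • b - b) • u := by
          rw [hΦdef, bcModSmul_smul]
          rw [smul_sub]; have e := sub_smul (g • b) b u; rw [e]; abel
        rw [h]
        refine Submodule.add_mem _ (Submodule.smul_mem _ _ hu) ?_
        exact Submodule.mem_sup_right
          (Submodule.smul_mem_smul (hgfix b) Submodule.mem_top)
      } with hU
  have hTsub : ∀ z ∈ GS,
      Φ ((1:A ⊗[k] K) ⊗ₜ[A] z) - (1:A ⊗[k] K) ⊗ₜ[A] z ∈ R' := by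
    intro z hz
    have h1 : Φ ((1:A ⊗[k] K) ⊗ₜ[A] z) = (1:A ⊗[k] K) ⊗ₜ[A] (g • z) := by
      rw [hΦdef, bcModSmul_tmul, smul_one]
    have h2 := hz.2 g hgn
    obtain ⟨p, hp, q, hq, hpq⟩ := Submodule.mem_sup.mp h2
    obtain ⟨wp, hwp⟩ := hp
    have h3 : Φ ((1:A ⊗[k] K) ⊗ₜ[A] z) - (1:A ⊗[k] K) ⊗ₜ[A] z =
        (1:A ⊗[k] K) ⊗ₜ[A] (g • z - z) := by
      rw [h1, TensorProduct.tmul_sub]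
    rw [h3, ← hpq, TensorProduct.tmul_add]
    refine Submodule.add_mem _ ?_ ?_
    · refine Submodule.mem_sup_left ⟨(1:A ⊗[k] K) ⊗ₜ[A] wp, ?_⟩
      rw [LinearMap.baseChange_tmul, hwp]
    · exact Submodule.mem_sup_right (one_tmul_mem_of_mem_smul x n hle hq)
  have hyU : y ∈ U := by
    have hle2 : Submodule.span (A ⊗[k] K) ((fun z => (1:A ⊗[k] K) ⊗ₜ[A] z) ''
          {z : E.X j | E.d j (j+1) rfl z ∈ n • (⊤ : Submodule A (E.X (j+1)))})
        ⊔ x • (⊤ : Submodule (A ⊗[k] K) ((A ⊗[k] K) ⊗[A] E.X j)) ≤ U := by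
      refine sup_le (le_trans hrefine (Submodule.span_le.mpr ?_)) ?_
      · rintro _ ⟨z, hz, rfl⟩
        exact hTsub z hz
      · intro t ht
        show Φ t - t ∈ R'
        exact Submodule.mem_sup_right (Submodule.sub_mem _ (hΦx t ht) ht)
    exact hle2 hkey
  exact hyU
end
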